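/- Let A be a t-locally GCD integral domain. Then every nonzero t-finite t-ideal of A is t-locally t-principal. -/

import Mathlib

open scoped nonZeroDivisors

section TOperation

variable (D : Type*) [CommRing D] [IsDomain D]
  (F : Type*) [Field F] [Algebra D F] [IsFractionRing D F]

/-- The `v`-operation on fractional ideals of `D`: `I^v = (D : (D : I))`. -/
noncomputable def vOp (I : FractionalIdeal D⁰ F) : FractionalIdeal D⁰ F :=
  1 / (1 / I)

/-- The `t`-operation (as a set): `N^t = ⋃ {J^v : J ⊆ N, J a finitely generated
fractional ideal}`. -/
noncomputable def tSet (N : Submodule D F) : Set F :=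
  ⋃ J ∈ {J : FractionalIdeal D⁰ F | (J : Submodule D F) ≤ N ∧ (J : Submodule D F).FG},
    (vOp D F J : Set F)

/-- The image of an integral ideal of `D` in `F`, as a `D`-submodule of `F`. -/
def idlSub (I : Ideal D) : Submodule D F :=
  ((I : FractionalIdeal D⁰ F) : Submodule D F)

/-- A (nonzero) ideal `I` of `D` is a `t`-ideal if `I^t = I`. -/
def IsTIdeal (I : Ideal D) : Prop :=
  I ≠ 0 ∧ tSet D F (idlSub D F I) = (idlSub D F I : Set F)

/-- A (nonzero) ideal `I` of `D` is `t`-finite if `J^t = I^t` for some finitely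
generated (nonzero) ideal `J`. -/
def IsTFinite (I : Ideal D) : Prop :=
  I ≠ 0 ∧ ∃ J : Ideal D, J ≠ 0 ∧ J.FG ∧ tSet D F (idlSub D F J) = tSet D F (idlSub D F I)

/-- An ideal of `D` is `t`-maximal if it is maximal among proper `t`-ideals. -/
def IsTMaximal (M : Ideal D) : Prop :=
  M ≠ ⊤ ∧ IsTIdeal D F M ∧ ∀ J : Ideal D, J ≠ ⊤ → IsTIdeal D F J → M ≤ J → J = M

/-- `D` has the `t`-finite character if every nonzero element of `D` lies in only
finitely many `t`-maximal ideals. -/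
def HasTFiniteCharacter : Prop :=
  ∀ a : D, a ≠ 0 → {M : Ideal D | IsTMaximal D F M ∧ a ∈ M}.Finite

/-- A (nonzero) ideal `I` of `D` is `t`-invertible if `(I·I⁻¹)^t = D`, where
`I⁻¹ = (D : I)`. -/
def IsTInvertible (I : Ideal D) : Prop :=
  I ≠ 0 ∧ tSet D F
      (((I : FractionalIdeal D⁰ F) * (1 / (I : FractionalIdeal D⁰ F)) :
        FractionalIdeal D⁰ F) : Submodule D F) =
    (((1 : FractionalIdeal D⁰ F) : Submodule D F) : Set F)

/-- `D` is `v`-coherent: for every nonzero finitely generated ideal `I`,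
`I⁻¹ = J^v` for some finitely generated (nonzero) fractional ideal `J`. -/
def IsVCoherent : Prop :=
  ∀ I : Ideal D, I ≠ 0 → I.FG →
    ∃ J : FractionalIdeal D⁰ F, J ≠ 0 ∧ (J : Submodule D F).FG ∧
      1 / (I : FractionalIdeal D⁰ F) = vOp D F J

/-- `D` is a PvMD if every nonzero finitely generated ideal of `D` is `t`-invertible. -/
def IsPvMD : Prop :=
  ∀ I : Ideal D, I ≠ 0 → I.FG → IsTInvertible D F I

/-- `D` is a GCD domain: any two elements have a greatest common divisor. -/
def IsGCDDomain (D : Type*) [CommRing D] [IsDomain D] : Prop :=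
  ∀ a b : D, ∃ d : D, d ∣ a ∧ d ∣ b ∧ ∀ c : D, c ∣ a → c ∣ b → c ∣ d

end TOperation

section Local

attribute [-instance] instAlgebraAtPrimeFractionRing

variable (A : Type*) [CommRing A] [IsDomain A]
  (K : Type*) [Field K] [Algebra A K] [IsFractionRing A K]

/-- A nonzero ideal `I` of `A` is `t`-locally `t`-finite if `IA_M` is `t_M`-finite for
every `t`-maximal (prime) ideal `M` of `A`. -/
def TLocallyTFinite (I : Ideal A) : Prop :=
  ∀ (M : Ideal A) [M.IsPrime], IsTMaximal A K M →
    IsTFinite (Localization.AtPrime M) (FractionRing (Localization.AtPrime M))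
      (I.map (algebraMap A (Localization.AtPrime M)))

/-- A nonzero ideal `I` of `A` is `t`-locally principal if `IA_M` is a principal ideal
of `A_M` for every `t`-maximal (prime) ideal `M` of `A`. -/
def TLocallyPrincipal (I : Ideal A) : Prop :=
  ∀ (M : Ideal A) [M.IsPrime], IsTMaximal A K M →
    (I.map (algebraMap A (Localization.AtPrime M))).IsPrincipal

/-- A nonzero ideal `I` of `A` is `t`-locally `t`-principal if `(IA_M)^{t_M}` is
principal for every `t`-maximal (prime) ideal `M` of `A`. -/
def TLocallyTPrincipal (I : Ideal A) : Prop :=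
  ∀ (M : Ideal A) [M.IsPrime], IsTMaximal A K M →
    ∃ x : Localization.AtPrime M,
      tSet (Localization.AtPrime M) (FractionRing (Localization.AtPrime M))
          (idlSub (Localization.AtPrime M) (FractionRing (Localization.AtPrime M))
            (I.map (algebraMap A (Localization.AtPrime M)))) =
        ((idlSub (Localization.AtPrime M) (FractionRing (Localization.AtPrime M))
            (Ideal.span {x})) : Set (FractionRing (Localization.AtPrime M)))

/-- A nonzero ideal `I` of `A` is `t`-locally `t`-invertible if `IA_M` is
`t_M`-invertible for every `t`-maximal (prime) ideal `M` of `A`. -/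
def TLocallyTInvertible (I : Ideal A) : Prop :=
  ∀ (M : Ideal A) [M.IsPrime], IsTMaximal A K M →
    IsTInvertible (Localization.AtPrime M) (FractionRing (Localization.AtPrime M))
      (I.map (algebraMap A (Localization.AtPrime M)))

/-- `A` is `t`-locally `v`-coherent if `A_M` is `v`-coherent for every `t`-maximal
(prime) ideal `M` of `A`. -/
def TLocallyVCoherent : Prop :=
  ∀ (M : Ideal A) [M.IsPrime], IsTMaximal A K M →
    IsVCoherent (Localization.AtPrime M) (FractionRing (Localization.AtPrime M))

/-- `A` is `t`-locally GCD if `A_M` is a GCD domain for every `t`-maximal (prime)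
ideal `M` of `A`. -/
def TLocallyGCD : Prop :=
  ∀ (M : Ideal A) [M.IsPrime], IsTMaximal A K M → IsGCDDomain (Localization.AtPrime M)

/-- `A` is a `t`-locally PvMD if `A_M` is a PvMD for every `t`-maximal (prime)
ideal `M` of `A`. -/
def TLocallyPvMD : Prop :=
  ∀ (M : Ideal A) [M.IsPrime], IsTMaximal A K M →
    IsPvMD (Localization.AtPrime M) (FractionRing (Localization.AtPrime M))

/-- `ℱ` is a `t`-comaximal collection over `a`: `a` lies in every member and
`(𝔞₁ + 𝔞₂)^t = A` for all distinct members. -/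
def IsTComaximalOver (a : A) (F : Set (Ideal A)) : Prop :=
  (∀ I ∈ F, a ∈ I) ∧ ∀ I ∈ F, ∀ J ∈ F, I ≠ J →
    tSet A K (idlSub A K (I + J)) = (((1 : FractionalIdeal A⁰ K) : Submodule A K) : Set K)

end Local

/-!
In a GCD domain the `v`-closure of a finitely generated ideal `J = (t₁, …, tₙ)` is principal,
generated by `d = gcd tᵢ`: since `gcd (r tᵢ) ∼ r d`, a fraction `r / s` satisfies `r tᵢ / s ∈ D`
for all `i` iff `r d / s ∈ D`, so `(D : J) = d⁻¹ D` and `J^v = d D`.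

A `t`-finite `t`-ideal is `I = J^v` for such a `J ⊆ I`, and `i ∈ J^v` says that `s ∣ r tᵢ` for
all `i` forces `s ∣ r i`. A divisibility `a ∣ tᵢ` in `A_M` comes from `a ∣ uᵢ tᵢ` in `A` with
`uᵢ ∉ M`, and the finitely many `uᵢ` can be multiplied together; so the gcd `d` of the `tᵢ`
in `A_M` divides every element of `I`. Hence `J A_M ⊆ I A_M ⊆ d A_M = (J A_M)^v`, which forces
`(I A_M)^t = d A_M`.
-/

open FractionalIdeal

section VOperation

variable {D : Type*} [CommRing D] [IsDomain D] {F : Type*} [Field F] [Algebra D F]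
  [IsFractionRing D F]

theorem FractionalIdeal.one_div_ne_zero {I : FractionalIdeal D⁰ F} (hI : I ≠ 0) :
    1 / I ≠ 0 := by
  obtain ⟨a, ha, hint⟩ := I.isFractional
  have hmem : algebraMap D F a ∈ 1 / I := by
    refine (mem_div_iff_of_ne_zero hI).2 fun y hy => (mem_one_iff _).2 ?_
    obtain ⟨c, hc⟩ := hint y hy
    exact ⟨c, by rw [hc, Algebra.smul_def]⟩
  intro h
  rw [h, mem_zero_iff] at hmem
  exact IsFractionRing.to_map_ne_zero_of_mem_nonZeroDivisors ha hmem

theorem FractionalIdeal.one_div_le_one_div_of_le {G H : FractionalIdeal D⁰ F} (hG : G ≠ 0)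
    (h : G ≤ H) : 1 / H ≤ 1 / G :=
  (le_div_iff_mul_le hG).2 <| (mul_le_mul_right h _).trans (mul_comm H _ ▸ mul_one_div_le_one)

theorem le_vOp (G : FractionalIdeal D⁰ F) : G ≤ vOp D F G := by
  rcases eq_or_ne G 0 with rfl | hG
  · exact zero_le _
  · exact (le_div_iff_mul_le (FractionalIdeal.one_div_ne_zero hG)).2 mul_one_div_le_one

theorem vOp_mono : Monotone (vOp D F) := by
  intro G H h
  rcases eq_or_ne G 0 with rfl | hG
  · simp [vOp]
  have hH : H ≠ 0 := fun hH => hG (FractionalIdeal.le_zero_iff.1 (hH ▸ h))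
  exact FractionalIdeal.one_div_le_one_div_of_le (FractionalIdeal.one_div_ne_zero hH)
    (FractionalIdeal.one_div_le_one_div_of_le hG h)

theorem one_div_vOp (G : FractionalIdeal D⁰ F) : 1 / vOp D F G = 1 / G := by
  rcases eq_or_ne G 0 with rfl | hG
  · simp [vOp]
  exact le_antisymm (FractionalIdeal.one_div_le_one_div_of_le hG (le_vOp G)) (le_vOp (1 / G))

theorem vOp_vOp (G : FractionalIdeal D⁰ F) : vOp D F (vOp D F G) = vOp D F G := by
  rw [vOp, one_div_vOp, vOp]

theorem tSet_eq_vOp {G : FractionalIdeal D⁰ F} {N : Submodule D F}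
    (hG : (G : Submodule D F).FG) (hGN : (G : Submodule D F) ≤ N)
    (hNG : N ≤ (vOp D F G : Submodule D F)) : tSet D F N = vOp D F G := by
  refine Set.Subset.antisymm ?_ fun x hx => Set.mem_iUnion₂.2 ⟨G, ⟨hGN, hG⟩, hx⟩
  simp only [tSet, Set.iUnion_subset_iff]
  rintro H ⟨hHN, -⟩
  rw [← vOp_vOp G]
  exact vOp_mono (coe_le_coe.1 (hHN.trans hNG))

theorem tSet_idlSub_eq_vOp {I J : Ideal D} (hJ : J.FG) (hJI : J ≤ I)
    (hIJ : (I : FractionalIdeal D⁰ F) ≤ vOp D F J) : tSet D F (idlSub D F I) = vOp D F J :=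
  tSet_eq_vOp ((coeIdeal_fg _ (IsFractionRing.injective D F) J).2 hJ)
    (coe_le_coe.2 ((coeIdeal_le_coeIdeal F).2 hJI)) (coe_le_coe.2 hIJ)

theorem coeIdeal_eq_vOp_of_tSet_eq {I J : Ideal D} (hJ : J.FG)
    (hI : tSet D F (idlSub D F I) = idlSub D F I)
    (hJI : tSet D F (idlSub D F J) = tSet D F (idlSub D F I)) :
    (I : FractionalIdeal D⁰ F) = vOp D F J :=
  coeToSubmodule_injective <| SetLike.coe_injective <|
    hI ▸ hJI ▸ tSet_idlSub_eq_vOp hJ le_rfl (le_vOp _)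

end VOperation

theorem dvd_mul_of_mem_span {R : Type*} [CommSemiring R] {T : Set R} {r s : R}
    (h : ∀ t ∈ T, s ∣ r * t) {j : R} (hj : j ∈ Ideal.span T) : s ∣ r * j := by
  have : Ideal.span T ≤ (Ideal.span {s}).colon {r} :=
    Ideal.span_le.2 fun t ht => by
      simpa [Ideal.mem_span_singleton, mul_comm] using h t ht
  simpa [Ideal.mem_span_singleton, mul_comm] using this hj

section Divisibility

variable {D : Type*} [CommRing D] {F : Type*} [Field F] [Algebra D F] [IsFractionRing D F]

theorem div_mul_mem_one_iff_dvd {r s : D} (hs : s ≠ 0) (t : D) :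
    algebraMap D F r / algebraMap D F s * algebraMap D F t ∈ (1 : FractionalIdeal D⁰ F) ↔
      s ∣ r * t := by
  have hs' : algebraMap D F s ≠ 0 := (IsFractionRing.to_map_eq_zero_iff (K := F)).not.2 hs
  rw [mem_one_iff]
  refine exists_congr fun c => ?_
  rw [eq_comm, div_mul_eq_mul_div, div_eq_iff hs', ← map_mul, ← map_mul,
    (IsFractionRing.injective D F).eq_iff, mul_comm c]

variable [IsDomain D]

theorem div_mem_one_div_span_iff {T : Set D} (hT : Ideal.span T ≠ ⊥) {r s : D} (hs : s ≠ 0) :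
    algebraMap D F r / algebraMap D F s ∈ 1 / (Ideal.span T : FractionalIdeal D⁰ F) ↔
      ∀ t ∈ T, s ∣ r * t := by
  rw [mem_div_iff_of_ne_zero (coeIdeal_ne_zero.2 hT)]
  refine ⟨fun h t ht => ?_, fun h y hy => ?_⟩
  · exact (div_mul_mem_one_iff_dvd hs t).1 (h _ (mem_coeIdeal_of_mem _ (Ideal.subset_span ht)))
  · obtain ⟨j, hj, rfl⟩ := (mem_coeIdeal _).1 hy
    exact (div_mul_mem_one_iff_dvd hs j).2 (dvd_mul_of_mem_span h hj)

theorem dvd_mul_of_mem_vOp_span {T : Set D} (hT : Ideal.span T ≠ ⊥) {i : D}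
    (hi : algebraMap D F i ∈ vOp D F (Ideal.span T)) {r s : D} (hs : s ≠ 0)
    (h : ∀ t ∈ T, s ∣ r * t) : s ∣ r * i := by
  rw [vOp, mem_div_iff_of_ne_zero (FractionalIdeal.one_div_ne_zero (coeIdeal_ne_zero.2 hT))]
    at hi
  rw [← div_mul_mem_one_iff_dvd (F := F) hs, mul_comm]
  exact hi _ ((div_mem_one_div_span_iff hT hs).2 h)

end Divisibility

section GCD

/-- Read with `r / s` a fraction, the right-hand side says `r / s ∈ (D : span T)`. -/
theorem exists_dvd_mul_iff_forall_dvd_mul {α : Type*} [CommMonoidWithZero α]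
    [GCDMonoid α] (T : Finset α) : ∃ d : α, ∀ r s : α, s ∣ r * d ↔ ∀ t ∈ T, s ∣ r * t := by
  classical
  induction T using Finset.induction_on with
  | empty => exact ⟨0, by simp⟩
  | insert a T _ ih =>
    obtain ⟨d, hd⟩ := ih
    refine ⟨gcd a d, fun r s => ?_⟩
    rw [← (gcd_mul_left' r a d).dvd_iff_dvd_right, dvd_gcd_iff, hd, Finset.forall_mem_insert]

noncomputable abbrev IsGCDDomain.gcdMonoid {D : Type*} [CommRing D] [IsDomain D]
    (h : IsGCDDomain D) : GCDMonoid D := by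
  classical
  exact gcdMonoidOfGCD (fun a b => (h a b).choose) (fun a b => (h a b).choose_spec.1)
    (fun a b => (h a b).choose_spec.2.1) (fun hac hab => (h _ _).choose_spec.2.2 _ hac hab)

variable {D : Type*} [CommRing D] [IsDomain D] {F : Type*} [Field F] [Algebra D F]
  [IsFractionRing D F]

theorem one_div_span_eq_spanSingleton_inv {T : Set D} (hT : Ideal.span T ≠ ⊥) {d : D}
    (hd0 : d ≠ 0) (hd : ∀ r s : D, s ∣ r * d ↔ ∀ t ∈ T, s ∣ r * t) :
    1 / (Ideal.span T : FractionalIdeal D⁰ F) = spanSingleton D⁰ (algebraMap D F d)⁻¹ := by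
  have hd0' : algebraMap D F d ≠ 0 := (IsFractionRing.to_map_eq_zero_iff (K := F)).not.2 hd0
  ext x
  obtain ⟨r, s, hs, rfl⟩ := IsFractionRing.div_surjective (A := D) (K := F) x
  have hs0 := nonZeroDivisors.ne_zero hs
  rw [div_mem_one_div_span_iff hT hs0, ← hd, ← div_mul_mem_one_iff_dvd (F := F) hs0,
    mem_one_iff, mem_spanSingleton]
  simp only [Algebra.smul_def, mul_inv_eq_iff_eq_mul₀ hd0']

theorem exists_vOp_span_eq_spanSingleton [GCDMonoid D] {T : Finset D}
    (hT : Ideal.span (T : Set D) ≠ ⊥) :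
    ∃ d : D, d ≠ 0 ∧ (∀ t ∈ T, d ∣ t) ∧
      vOp D F (Ideal.span (T : Set D)) = spanSingleton D⁰ (algebraMap D F d) := by
  obtain ⟨d, hd⟩ := exists_dvd_mul_iff_forall_dvd_mul T
  have hd0 : d ≠ 0 := by
    rintro rfl
    refine hT (Ideal.span_eq_bot.2 fun t ht => ?_)
    simpa using (hd 1 0).1 (by simp) t ht
  refine ⟨d, hd0, fun t ht => by simpa using (hd 1 d).1 (by simp) t ht, ?_⟩
  rw [vOp, one_div_span_eq_spanSingleton_inv hT hd0 hd, one_div_spanSingleton, inv_inv]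

end GCD

namespace IsLocalization

variable {R : Type*} [CommRing R] {L : Type*} [CommRing L] [Algebra R L] (S : Submonoid R)
  [IsLocalization S L]

theorem exists_mem_dvd_mul_of_algebraMap_dvd {a t : R}
    (h : algebraMap R L a ∣ algebraMap R L t) : ∃ u ∈ S, a ∣ u * t := by
  obtain ⟨c, hc⟩ := h
  obtain ⟨⟨c', v⟩, hcv⟩ := surj S c
  obtain ⟨w, hw⟩ := exists_of_eq (M := S) (S := L) (x := t * v) (y := a * c') <| by
    rw [map_mul, map_mul, hc, ← hcv, mul_assoc]
  exact ⟨w * v, S.mul_mem w.2 v.2, ⟨w * c', by rw [mul_assoc, mul_comm (v : R), hw]; ring⟩⟩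

theorem exists_mem_forall_dvd_mul_of_algebraMap_dvd (T : Finset R) {a : R}
    (h : ∀ t ∈ T, algebraMap R L a ∣ algebraMap R L t) : ∃ u ∈ S, ∀ t ∈ T, a ∣ u * t := by
  choose u huS hu using fun t ht => exists_mem_dvd_mul_of_algebraMap_dvd S (h t ht)
  refine ⟨∏ t ∈ T.attach, u t.1 t.2, prod_mem fun t _ => huS t.1 t.2, fun t ht => ?_⟩
  exact (hu t ht).trans (mul_dvd_mul_right (Finset.dvd_prod_of_mem _ (T.mem_attach ⟨t, ht⟩)) t)

end IsLocalization

theorem dvd_algebraMap_of_mem_vOp_span {D : Type*} [CommRing D] [IsDomain D] {F : Type*}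
    [Field F] [Algebra D F] [IsFractionRing D F] {L : Type*} [CommRing L] [Algebra D L]
    (S : Submonoid D) [IsLocalization S L] {T : Finset D} (hT : Ideal.span (T : Set D) ≠ ⊥)
    {i : D} (hi : algebraMap D F i ∈ vOp D F (Ideal.span (T : Set D))) {d : L} (hd0 : d ≠ 0)
    (hd : ∀ t ∈ T, d ∣ algebraMap D L t) : d ∣ algebraMap D L i := by
  obtain ⟨⟨a, u⟩, hau⟩ := IsLocalization.surj S d
  have hu := IsLocalization.map_units L u
  have hda : Associated d (algebraMap D L a) := ⟨hu.unit, hau⟩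
  have ha0 : a ≠ 0 := by
    rintro rfl
    rw [map_zero, hu.mul_left_eq_zero] at hau
    exact hd0 hau
  obtain ⟨r, hrS, har⟩ := IsLocalization.exists_mem_forall_dvd_mul_of_algebraMap_dvd (L := L)
    S T fun t ht => hda.symm.dvd.trans (hd t ht)
  have hai : algebraMap D L a ∣ algebraMap D L r * algebraMap D L i := by
    rw [← map_mul]
    exact map_dvd _ (dvd_mul_of_mem_vOp_span hT hi ha0 har)
  exact hda.dvd.trans ((IsLocalization.map_units L ⟨r, hrS⟩).dvd_mul_left.1 hai)

theorem exists_tSet_map_eq_span_singleton {D : Type*} [CommRing D] [IsDomain D] {F : Type*}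
    [Field F] [Algebra D F] [IsFractionRing D F] {L : Type*} [CommRing L] [IsDomain L]
    [GCDMonoid L] [Algebra D L] {S : Submonoid D} (hS : S ≤ D⁰) [IsLocalization S L]
    {FL : Type*} [Field FL] [Algebra L FL] [IsFractionRing L FL] {I : Ideal D} {T : Finset D}
    (hT : Ideal.span (T : Set D) ≠ ⊥) (hTI : Ideal.span (T : Set D) ≤ I)
    (hIT : (I : FractionalIdeal D⁰ F) ≤ vOp D F (Ideal.span (T : Set D))) :
    ∃ d : L, tSet L FL (idlSub L FL (I.map (algebraMap D L))) =
      idlSub L FL (Ideal.span {d}) := by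
  classical
  set ρ := algebraMap D L
  have hTL : (Ideal.span (T : Set D)).map ρ = Ideal.span (↑(T.image ρ) : Set L) := by
    rw [Ideal.map_span, Finset.coe_image]
  have hTL0 : Ideal.span (↑(T.image ρ) : Set L) ≠ ⊥ := by
    rw [← hTL]
    exact (Ideal.map_eq_bot_iff_of_injective (IsLocalization.injective L hS)).not.2 hT
  obtain ⟨d, hd0, hdT, hv⟩ := exists_vOp_span_eq_spanSingleton (F := FL) hTL0
  rw [← hTL] at hv
  have hIL : I.map ρ ≤ Ideal.span {d} := Ideal.map_le_iff_le_comap.2 fun i hi =>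
    Ideal.mem_span_singleton.2 <| dvd_algebraMap_of_mem_vOp_span S hT
      (hIT (mem_coeIdeal_of_mem _ hi)) hd0 fun t ht => hdT _ (Finset.mem_image_of_mem ρ ht)
  have hILv : (I.map ρ : FractionalIdeal L⁰ FL) ≤ vOp L FL ((Ideal.span (T : Set D)).map ρ) := by
    rw [hv, ← coeIdeal_span_singleton]
    exact (coeIdeal_le_coeIdeal FL).2 hIL
  refine ⟨d, ?_⟩
  rw [tSet_idlSub_eq_vOp (Ideal.FG.map ⟨T, rfl⟩ ρ) (Ideal.map_mono hTI) hILv, hv, idlSub,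
    coeIdeal_span_singleton]
  rfl

-- The definitions were elaborated without this instance, which would give
-- `FractionRing (Localization.AtPrime M)` a second, non-defeq `Localization.AtPrime M`-algebra.
attribute [-instance] instAlgebraAtPrimeFractionRing

variable {A : Type*} [CommRing A] [IsDomain A]
  {K : Type*} [Field K] [Algebra A K] [IsFractionRing A K]

/-- Let `A` be a `t`-locally GCD integral domain. Then every nonzero `t`-finite
`t`-ideal of `A` is `t`-locally `t`-principal. -/
theorem tLocallyTPrincipal_of_tFinite_of_tLocallyGCD
    (hgcd : TLocallyGCD A K) :
    ∀ I : Ideal A, I ≠ 0 → IsTIdeal A K I → IsTFinite A K I →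
      TLocallyTPrincipal A K I := by
  rintro I - ⟨-, hIt⟩ ⟨-, J, hJ0, ⟨T, rfl⟩, hJt⟩ M _ hM
  have hIJ := coeIdeal_eq_vOp_of_tSet_eq (F := K) ⟨T, rfl⟩ hIt hJt
  have := (hgcd M hM).gcdMonoid
  exact exists_tSet_map_eq_span_singleton M.primeCompl_le_nonZeroDivisors hJ0
    ((coeIdeal_le_coeIdeal K).1 (hIJ ▸ le_vOp _)) hIJ.le
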